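/- arXiv:2110.03733 — 3 statements merged into one kernel-verified Lean document; each statement's English description precedes it below -/
import Mathlib

section
/- Let p be a prime and let r be a topological generator of U_1. Then there is a unique continuous group homomorphism φ_r from the multiplicative topological group ℤ_p^× to the additive topological group ℤ_p with φ_r(r) = 1; moreover, every continuous group homomorphism ψ : ℤ_p^× → ℤ_p is of the form ψ = a·φ_r for a unique a ∈ ℤ_p. In other words, the group of continuous homomorphisms from ℤ_p^× to (ℤ_p, +) is a free ℤ_p-module of rank 1 generated by φ_r. -/
/-!
Let `k = 2` if `p = 2` and `k = 1` otherwise. For `u ≡ 1 mod p`, Mahler's theorem provides the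
continuous character `a ↦ u ^ a` of `ℤ_p`. For `u = r` it maps `ℤ_p` into the closed subgroup `U₁`;
its image is compact and contains the dense subgroup `⟨r⟩`, so it is onto, and it is injective since
otherwise `r` would have finite order and `U₁ = ⟨r⟩` would be finite. Inverting this homeomorphism
`ℤ_p ≅ U₁` gives `log_r : U₁ → ℤ_p`, which extends to `ℤ_pˣ` through the retraction
`x ↦ x ^ (p - 1)` followed by division by the unit `p - 1` when `p` is odd, and `x ↦ ±x` when
`p = 2`. Conversely, a continuous homomorphism to `ℤ_p` is determined on `U₁` by its value at `r`,
by density, hence everywhere, because `x ^ #(ℤ/p^k)ˣ ∈ U₁` and `ℤ_p` is torsion-free.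
-/

/-- For a prime `p`, the subgroup `U₁` of `ℤ_[p]ˣ` of units congruent to `1` modulo `p`
(if `p` is odd) or modulo `4` (if `p = 2`), defined as the kernel of the reduction map
`ℤ_[p]ˣ → (ZMod (p ^ k))ˣ` with `k = 2` if `p = 2` and `k = 1` otherwise. -/
noncomputable def U1 (p : ℕ) [Fact p.Prime] : Subgroup ℤ_[p]ˣ :=
  (Units.map ((PadicInt.toZModPow (if p = 2 then 2 else 1) :
    ℤ_[p] →+* ZMod (p ^ (if p = 2 then 2 else 1))) :
    ℤ_[p] →* ZMod (p ^ (if p = 2 then 2 else 1)))).ker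

open PadicInt Function

section MapMulEqAdd

variable {G A : Type*} [Group G] [AddGroup A] {f : G → A}

lemma map_zpow_of_map_mul (hf : ∀ x y, f (x * y) = f x + f y) (x : G) (n : ℤ) :
    f (x ^ n) = n • f x :=
  congrArg Multiplicative.toAdd
    ((MonoidHom.mk' (fun x ↦ Multiplicative.ofAdd (f x)) hf).map_zpow x n)

lemma map_pow_of_map_mul (hf : ∀ x y, f (x * y) = f x + f y) (x : G) (n : ℕ) :
    f (x ^ n) = n • f x := by
  simpa using map_zpow_of_map_mul hf x n

lemma eq_of_dense_zpowers [TopologicalSpace G] [TopologicalSpace A] [T2Space A] {g : G}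
    (hg : Dense (Subgroup.zpowers g : Set G)) {f₁ f₂ : G → A}
    (hc₁ : Continuous f₁) (hc₂ : Continuous f₂) (hf₁ : ∀ x y, f₁ (x * y) = f₁ x + f₁ y)
    (hf₂ : ∀ x y, f₂ (x * y) = f₂ x + f₂ y) (h : f₁ g = f₂ g) : f₁ = f₂ :=
  hc₁.ext_on hg hc₂ fun _ ⟨n, hn⟩ ↦ by
    simp only [← hn, map_zpow_of_map_mul hf₁, map_zpow_of_map_mul hf₂, h]

lemma eq_of_eqOn_of_pow_mem [IsAddTorsionFree A] {H : Subgroup G} {n : ℕ} (hn : n ≠ 0)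
    (hH : ∀ x, x ^ n ∈ H) {f₁ f₂ : G → A} (hf₁ : ∀ x y, f₁ (x * y) = f₁ x + f₁ y)
    (hf₂ : ∀ x y, f₂ (x * y) = f₂ x + f₂ y) (h : ∀ x ∈ H, f₁ x = f₂ x) : f₁ = f₂ :=
  funext fun x ↦ IsAddTorsionFree.nsmul_right_injective hn <| by
    simp only [← map_pow_of_map_mul hf₁, ← map_pow_of_map_mul hf₂, h _ (hH x)]

lemma exists_extension_of_retraction {R : Type*} [TopologicalSpace G] [CommRing R]
    [TopologicalSpace R] [ContinuousMul R] {H : Subgroup G} {ρ : G → H} {n : ℕ}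
    (hρc : Continuous ρ) (hρ : ∀ x y, ρ (x * y) = ρ x * ρ y) (hρH : ∀ h : H, ρ h = h ^ n)
    (hn : IsUnit (n : R)) {f : H → R} (hfc : Continuous f) (hf : ∀ x y, f (x * y) = f x + f y) :
    ∃ φ : G → R, Continuous φ ∧ (∀ x y, φ (x * y) = φ x + φ y) ∧ ∀ h : H, φ h = f h := by
  refine ⟨fun x ↦ ↑hn.unit⁻¹ * f (ρ x), continuous_const.mul (hfc.comp hρc),
    fun x y ↦ by simp only [hρ, hf, mul_add], fun h ↦ ?_⟩
  show ↑hn.unit⁻¹ * f (ρ h) = f h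
  rw [hρH, map_pow_of_map_mul hf, nsmul_eq_mul, ← mul_assoc, hn.val_inv_mul, one_mul]

end MapMulEqAdd

lemma exists_retraction_of_mem_or_mul_mem {G : Type*} [CommGroup G] [TopologicalSpace G]
    [ContinuousMul G] {H : Subgroup G} (hH : IsClopen (H : Set G)) {ε : G} (hε : ε * ε = 1)
    (hcover : ∀ x, x ∈ H ∨ ε * x ∈ H) :
    ∃ ρ : G → H, Continuous ρ ∧ (∀ x y, ρ (x * y) = ρ x * ρ y) ∧ ∀ h : H, ρ h = h := by
  classical
  have hmem (x : G) : (if x ∈ H then x else ε * x) ∈ H := by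
    split_ifs with hx
    exacts [hx, (hcover x).resolve_left hx]
  refine ⟨fun x ↦ ⟨_, hmem x⟩, ?_, fun x y ↦ Subtype.ext ?_, fun h ↦ Subtype.ext (if_pos h.2)⟩
  · refine (Continuous.if (fun a ha ↦ ?_) continuous_id (continuous_const_mul ε)).subtype_mk _
    rw [show {x | x ∈ H} = (H : Set G) from rfl, hH.frontier_eq] at ha
    exact absurd ha (Set.notMem_empty a)
  · show (if x * y ∈ H then x * y else ε * (x * y)) =
      (if x ∈ H then x else ε * x) * (if y ∈ H then y else ε * y)
    by_cases hx : x ∈ H <;> by_cases hy : y ∈ H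
    · simp [hx, hy, H.mul_mem hx hy]
    · simp [hx, hy, (H.mul_mem_cancel_left hx).not.2 hy, mul_left_comm]
    · simp [hx, hy, (H.mul_mem_cancel_right hy).not.2 hx, mul_assoc]
    · have hxy : x * y ∈ H := by
        simpa [mul_mul_mul_comm, hε] using
          H.mul_mem ((hcover x).resolve_left hx) ((hcover y).resolve_left hy)
      simp [hx, hy, hxy, mul_mul_mul_comm, hε]

namespace PadicInt

variable {p : ℕ} [Fact p.Prime] {u : ℤ_[p]ˣ}

noncomputable def unitPow (u : ℤ_[p]ˣ) (hu : ‖(u : ℤ_[p]) - 1‖ < 1) : AddChar ℤ_[p] ℤ_[p]ˣ :=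
  AddChar.toMonoidHomEquiv.symm (addChar_of_value_at_one ((u : ℤ_[p]) - 1)
    (tendsto_pow_atTop_nhds_zero_of_norm_lt_one hu)).toMonoidHom.toHomUnits

lemma continuous_unitPow (hu : ‖(u : ℤ_[p]) - 1‖ < 1) : Continuous (unitPow u hu) := by
  have hκ := continuous_addChar_of_value_at_one (p := p)
    (tendsto_pow_atTop_nhds_zero_of_norm_lt_one hu)
  refine Units.continuous_iff.2 ⟨hκ, ?_⟩
  simp_rw [← AddChar.map_neg_eq_inv]
  exact hκ.comp continuous_neg

@[simp] lemma unitPow_one (hu : ‖(u : ℤ_[p]) - 1‖ < 1) : unitPow u hu 1 = u :=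
  Units.ext <| (addChar_of_value_at_one_def (tendsto_pow_atTop_nhds_zero_of_norm_lt_one hu)).trans
    (add_sub_cancel _ _)

end PadicInt

section TopologicalGenerator

variable {p : ℕ} [Fact p.Prime] {G : Type*} [Group G] [TopologicalSpace G] [T2Space G]
  {E : AddChar ℤ_[p] G}

lemma AddChar.map_intCast_eq_zpow {A M : Type*} [AddGroupWithOne A] [DivisionMonoid M]
    (E : AddChar A M) (z : ℤ) : E z = E 1 ^ z := by
  rw [← E.map_zsmul_eq_zpow, zsmul_one]

lemma AddChar.surjective_of_dense_zpowers (hE : Continuous E)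
    (hg : Dense (Subgroup.zpowers (E 1) : Set G)) : Surjective E := by
  have hsub : (Subgroup.zpowers (E 1) : Set G) ⊆ Set.range E := by
    rintro _ ⟨z, rfl⟩
    exact ⟨z, E.map_intCast_eq_zpow z⟩
  exact fun x ↦ (isCompact_range hE).isClosed.closure_subset_iff.2 hsub (hg x)

lemma AddChar.injective_of_dense_zpowers [Infinite G] (hE : Continuous E)
    (hg : Dense (Subgroup.zpowers (E 1) : Set G)) : Injective E := by
  suffices h : ∀ c, E c = 1 → c = 0 by
    refine fun a b hab ↦ sub_eq_zero.1 (h _ ?_)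
    rw [sub_eq_add_neg, AddChar.map_add_eq_mul, AddChar.map_neg_eq_inv, hab, mul_inv_cancel]
  intro c hc
  by_contra hc0
  have hker (s : ℤ_[p]) : E (c * s) = 1 :=
    denseRange_intCast.induction_on s
      (isClosed_eq (hE.comp (continuous_const_mul c)) continuous_const) fun z ↦ by
        rw [mul_comm, ← zsmul_eq_mul, AddChar.map_zsmul_eq_zpow, hc, one_zpow]
  -- `c` is `p ^ v` times a unit, so `E 1 ^ p ^ v = 1`
  have hfin : IsOfFinOrder (E 1) := by
    refine isOfFinOrder_iff_pow_eq_one.2 ⟨p ^ c.valuation, pow_pos (Fact.out : p.Prime).pos _, ?_⟩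
    have hpow : ((p ^ c.valuation : ℕ) : ℤ_[p]) = c * ↑(unitCoeff hc0)⁻¹ := by
      rw [mul_comm, eq_comm, Units.inv_mul_eq_iff_eq_mul, Nat.cast_pow]
      exact unitCoeff_spec hc0
    rw [← AddChar.map_nsmul_eq_pow, nsmul_one, hpow, hker]
  have huniv : (Subgroup.zpowers (E 1) : Set G) = Set.univ := by
    rw [← hfin.finite_zpowers.isClosed.closure_eq, hg.closure_eq]
  exact Set.infinite_univ (huniv ▸ hfin.finite_zpowers)

lemma AddChar.exists_continuous_log [Infinite G] (hE : Continuous E)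
    (hg : Dense (Subgroup.zpowers (E 1) : Set G)) :
    ∃ φ : G → ℤ_[p], Continuous φ ∧ (∀ x y, φ (x * y) = φ x + φ y) ∧ ∀ a, φ (E a) = a := by
  have hbij : Bijective E :=
    ⟨E.injective_of_dense_zpowers hE hg, E.surjective_of_dense_zpowers hE hg⟩
  let e := (hE.homeoOfEquivCompactToT2 (f := Equiv.ofBijective E hbij)).symm
  have he (a : ℤ_[p]) : e (E a) = a := (Equiv.ofBijective E hbij).symm_apply_apply a
  refine ⟨e, e.continuous, fun x y ↦ ?_, he⟩
  obtain ⟨a, rfl⟩ := hbij.2 x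
  obtain ⟨b, rfl⟩ := hbij.2 y
  rw [← AddChar.map_add_eq_mul, he, he, he]

end TopologicalGenerator

section U1

variable {p : ℕ} [Fact p.Prime]

lemma mem_U1_iff_dvd {x : ℤ_[p]ˣ} :
    x ∈ U1 p ↔ (p : ℤ_[p]) ^ (if p = 2 then 2 else 1) ∣ (x : ℤ_[p]) - 1 := by
  rw [U1, MonoidHom.mem_ker, Units.ext_iff, ← Ideal.mem_span_singleton, ← ker_toZModPow,
    RingHom.mem_ker, map_sub, sub_eq_zero, map_one]
  rfl

lemma isClopen_U1 : IsClopen (U1 p : Set ℤ_[p]ˣ) := by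
  have hU1 : (U1 p : Set ℤ_[p]ˣ) = (fun x : ℤ_[p]ˣ ↦ (x : ℤ_[p]) - 1) ⁻¹'
      Metric.closedBall 0 ((p : ℝ) ^ (-(if p = 2 then 2 else 1 : ℕ) : ℤ)) := by
    ext x
    rw [SetLike.mem_coe, mem_U1_iff_dvd, Set.mem_preimage, mem_closedBall_zero_iff,
      norm_le_pow_iff_mem_span_pow, Ideal.mem_span_singleton]
  rw [hU1]
  have hp : (p : ℝ) ≠ 0 := Nat.cast_ne_zero.2 (Fact.out : p.Prime).ne_zero
  exact (IsUltrametricDist.isClopen_closedBall 0 (zpow_ne_zero _ hp)).preimage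
    (Units.continuous_val.sub continuous_const)

lemma norm_sub_one_lt_one_of_mem_U1 {x : ℤ_[p]ˣ} (hx : x ∈ U1 p) : ‖(x : ℤ_[p]) - 1‖ < 1 :=
  (norm_lt_one_iff_dvd _).2 <|
    (dvd_pow_self _ (by split_ifs <;> norm_num)).trans (mem_U1_iff_dvd.1 hx)

lemma pow_card_mem_U1 (x : ℤ_[p]ˣ) :
    x ^ Nat.card (ZMod (p ^ (if p = 2 then 2 else 1)))ˣ ∈ U1 p := by
  rw [U1, MonoidHom.mem_ker, map_pow]
  exact pow_card_eq_one'

instance : Infinite (U1 p) := by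
  have hunit (n : ℕ) : IsUnit (1 + (p : ℤ_[p]) ^ 2 * n) := by
    rw [← sub_neg_eq_add]
    refine IsLocalRing.isUnit_one_sub_self_of_mem_nonunits _ ?_
    rw [← IsLocalRing.mem_maximalIdeal, maximalIdeal_eq_span_p, Ideal.mem_span_singleton]
    exact (Dvd.intro _ (pow_two _).symm).mul_right _ |>.neg_right
  have hmem (n : ℕ) : (hunit n).unit ∈ U1 p := by
    rw [mem_U1_iff_dvd, IsUnit.unit_spec, add_sub_cancel_left]
    exact (pow_dvd_pow _ (by split_ifs <;> norm_num)).mul_right _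
  refine Infinite.of_injective (fun n ↦ ⟨(hunit n).unit, hmem n⟩) fun m n h ↦ ?_
  have hp : (p : ℤ_[p]) ^ 2 ≠ 0 := pow_ne_zero _ (Nat.cast_ne_zero.2 (Fact.out : p.Prime).ne_zero)
  simpa [hp] using congrArg (fun x : U1 p ↦ ((x : ℤ_[p]ˣ) : ℤ_[p])) h

lemma mem_U1_two_or_neg_mem (x : ℤ_[2]ˣ) : x ∈ U1 2 ∨ -x ∈ U1 2 := by
  simp only [mem_U1_iff_dvd, if_pos, ← Ideal.mem_span_singleton, ← ker_toZModPow,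
    RingHom.mem_ker, Units.val_neg, map_sub, map_neg, map_one]
  obtain ⟨v, hv⟩ := x.isUnit.map (toZModPow 2 : ℤ_[2] →+* ZMod (2 ^ 2))
  rw [← hv]
  clear hv
  revert v
  decide

lemma exists_log_U1 {r : U1 p} (hr : Dense (Subgroup.zpowers r : Set (U1 p))) :
    ∃ φ : U1 p → ℤ_[p], Continuous φ ∧ (∀ x y, φ (x * y) = φ x + φ y) ∧ φ r = 1 := by
  have hr1 := norm_sub_one_lt_one_of_mem_U1 r.2
  have hclosed : IsClosed {a | unitPow (r : ℤ_[p]ˣ) hr1 a ∈ U1 p} :=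
    isClopen_U1.isClosed.preimage (continuous_unitPow hr1)
  have hint (z : ℤ) : unitPow (r : ℤ_[p]ˣ) hr1 z ∈ U1 p := by
    rw [AddChar.map_intCast_eq_zpow, unitPow_one]
    exact zpow_mem r.2 z
  have hmem (a : ℤ_[p]) : unitPow (r : ℤ_[p]ˣ) hr1 a ∈ U1 p :=
    PadicInt.denseRange_intCast.induction_on a hclosed hint
  let E : AddChar ℤ_[p] (U1 p) :=
    { toFun a := ⟨unitPow (r : ℤ_[p]ˣ) hr1 a, hmem a⟩
      map_zero_eq_one' := Subtype.ext (AddChar.map_zero_eq_one _)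
      map_add_eq_mul' a b := Subtype.ext (AddChar.map_add_eq_mul _ a b) }
  have hE1 : E 1 = r := Subtype.ext (unitPow_one hr1)
  have hEc : Continuous E := (continuous_unitPow hr1).subtype_mk hmem
  rw [← hE1] at hr ⊢
  obtain ⟨φ, hφc, hφ, hφE⟩ := E.exists_continuous_log hEc hr
  exact ⟨φ, hφc, hφ, hφE 1⟩

variable (p) in
lemma exists_retraction_U1 :
    ∃ (ρ : ℤ_[p]ˣ → U1 p) (n : ℕ), Continuous ρ ∧ (∀ x y, ρ (x * y) = ρ x * ρ y) ∧
      (∀ h : U1 p, ρ h = h ^ n) ∧ IsUnit (n : ℤ_[p]) := by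
  by_cases hp : p = 2
  · subst hp
    have hcover (x : ℤ_[2]ˣ) : x ∈ U1 2 ∨ -1 * x ∈ U1 2 := by
      rw [neg_one_mul]
      exact mem_U1_two_or_neg_mem x
    obtain ⟨ρ, hρc, hρ, hρH⟩ :=
      exists_retraction_of_mem_or_mul_mem isClopen_U1 (by rw [neg_one_mul, neg_neg]) hcover
    refine ⟨ρ, 1, hρc, hρ, fun h ↦ (hρH h).trans (pow_one h).symm, ?_⟩
    rw [Nat.cast_one]
    exact isUnit_one
  · refine ⟨fun x ↦ ⟨_, pow_card_mem_U1 x⟩, _, (continuous_pow _).subtype_mk _,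
      fun x y ↦ Subtype.ext (mul_pow x y _), fun h ↦ rfl, ?_⟩
    rw [if_neg hp, pow_one, Nat.card_eq_fintype_card, ZMod.card_units, PadicInt.isUnit_iff,
      norm_natCast_p_sub_one]

lemma exists_continuous_log_units {r : U1 p} (hr : Dense (Subgroup.zpowers r : Set (U1 p))) :
    ∃ φ : ℤ_[p]ˣ → ℤ_[p], Continuous φ ∧ (∀ x y, φ (x * y) = φ x + φ y) ∧ φ r = 1 := by
  obtain ⟨φ₀, hφ₀c, hφ₀, hφ₀r⟩ := exists_log_U1 hr
  obtain ⟨ρ, n, hρc, hρ, hρH, hn⟩ := exists_retraction_U1 p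
  obtain ⟨φ, hφc, hφ, hφH⟩ := exists_extension_of_retraction hρc hρ hρH hn hφ₀c hφ₀
  exact ⟨φ, hφc, hφ, (hφH r).trans hφ₀r⟩

lemma units_ext_of_dense_zpowers {A : Type*} [AddGroup A] [TopologicalSpace A] [T2Space A]
    [IsAddTorsionFree A] {r : U1 p} (hr : Dense (Subgroup.zpowers r : Set (U1 p)))
    {f₁ f₂ : ℤ_[p]ˣ → A} (hc₁ : Continuous f₁) (hc₂ : Continuous f₂)
    (hf₁ : ∀ x y, f₁ (x * y) = f₁ x + f₁ y) (hf₂ : ∀ x y, f₂ (x * y) = f₂ x + f₂ y)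
    (h : f₁ r = f₂ r) : f₁ = f₂ := by
  have : NeZero (p ^ (if p = 2 then 2 else 1)) := ⟨pow_ne_zero _ (Fact.out : p.Prime).ne_zero⟩
  have hU1 := eq_of_dense_zpowers hr (hc₁.comp continuous_subtype_val)
    (hc₂.comp continuous_subtype_val) (fun x y ↦ hf₁ x y) (fun x y ↦ hf₂ x y) h
  exact eq_of_eqOn_of_pow_mem Nat.card_pos.ne' pow_card_mem_U1 hf₁ hf₂
    fun x hx ↦ congrFun hU1 ⟨x, hx⟩

end U1

/-- For a topological generator `r` of `U₁ ⊆ ℤ_pˣ`, there is a unique continuous group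
homomorphism `φ_r : ℤ_pˣ → (ℤ_p, +)` with `φ_r r = 1`, and every continuous group
homomorphism `ψ : ℤ_pˣ → (ℤ_p, +)` equals `a • φ_r` for a unique `a ∈ ℤ_p`; i.e. the
group of such homomorphisms is a free `ℤ_p`-module of rank one generated by `φ_r`. -/
theorem stmt9 (p : ℕ) [Fact p.Prime] (r : U1 p)
    (hr : Dense (Subgroup.zpowers r : Set (U1 p))) :
    ∃ φ : ℤ_[p]ˣ → ℤ_[p],
      (Continuous φ ∧ (∀ x y : ℤ_[p]ˣ, φ (x * y) = φ x + φ y) ∧ φ (r : ℤ_[p]ˣ) = 1) ∧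
      (∀ φ' : ℤ_[p]ˣ → ℤ_[p], Continuous φ' → (∀ x y : ℤ_[p]ˣ, φ' (x * y) = φ' x + φ' y) →
        φ' (r : ℤ_[p]ˣ) = 1 → φ' = φ) ∧
      (∀ ψ : ℤ_[p]ˣ → ℤ_[p], Continuous ψ → (∀ x y : ℤ_[p]ˣ, ψ (x * y) = ψ x + ψ y) →
        ∃! a : ℤ_[p], ψ = fun x => a * φ x) := by
  obtain ⟨φ, hφc, hφ, hφr⟩ := exists_continuous_log_units hr
  refine ⟨φ, ⟨hφc, hφ, hφr⟩, fun φ' hc h hr' ↦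
    units_ext_of_dense_zpowers hr hc hφc h hφ (hr'.trans hφr.symm), fun ψ hc hψ ↦ ⟨ψ r, ?_, ?_⟩⟩
  · exact units_ext_of_dense_zpowers hr hc (continuous_const.mul hφc) hψ
      (fun x y ↦ by simp only [hφ, mul_add]) (by simp only [hφr, mul_one])
  · intro a ha
    simpa [hφr] using (congrFun ha r).symm
end

section
/- Let p and ℓ be distinct primes and q a nonzero integer, and let ℤ_p(q) denote the representation of the infinite cyclic group ℤ on the ℤ_p-module ℤ_p in which a fixed generator of ℤ acts by multiplication by ℓ^q (a unit of ℤ_p). Then the group cohomology satisfies H^0(ℤ; ℤ_p(q)) = 0 and H^1(ℤ; ℤ_p(q)) ≅ ℤ_p/(ℓ^q − 1)ℤ_p, which is a finite cyclic group of order p^{v_p(ℓ^q − 1)}, where v_p denotes the p-adic valuation. -/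
/-!
Write `w = ℓ ^ q`. As `ℓ ^ |q| ≠ 1`, `w ≠ 1`, so `w - 1` is a non-zero-divisor of `ℤ_p`.
An invariant `x` satisfies `(w - 1) x = 0`, hence `H⁰ = 0`. Comparing the cocycle identity for
`n + 1` and `1 + n` gives `(w - 1) f(n) = (w ^ n - 1) f(1)`, so a 1-cocycle is `f(n) = σₙ f(1)`
with `σₙ = (w ^ n - 1) / (w - 1)`, and every value of `f(1)` occurs; the coboundary of `c` has
`f(1) = (w - 1) c`. Hence `H¹ ≅ ℤ_p / (w - 1)`. Finally `w - 1 = unit · p ^ v` in `ℤ_p`, and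
`ℤ_p / p ^ v ≅ ℤ / p ^ v`.
-/

open CategoryTheory

set_option synthInstance.maxHeartbeats 1000000
set_option maxHeartbeats 1000000

/-- The representation `ℤ_p(q)` of the infinite cyclic group `ℤ` (written multiplicatively
as `Multiplicative ℤ`) on the `ℤ_p`-module `ℤ_p`, where a fixed generator acts by
multiplication by the unit `u ^ q` (with `u` the unit `ℓ` of `ℤ_p`). -/
noncomputable def twistRep (p : ℕ) [Fact p.Prime] (u : ℤ_[p]ˣ) (q : ℤ) :
    Representation ℤ_[p] (Multiplicative ℤ) ℤ_[p] :=
  ((Algebra.lmul ℤ_[p] ℤ_[p]).toRingHom.toMonoidHom).comp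
    ((Units.coeHom ℤ_[p]).comp (zpowersHom ℤ_[p]ˣ (u ^ q)))

open groupCohomology

section UnitZPowRep

variable {k : Type} [CommRing k]

noncomputable def unitZPowRep (w : kˣ) : Representation k (Multiplicative ℤ) k :=
  ((Algebra.lmul k k).toRingHom.toMonoidHom).comp ((Units.coeHom k).comp (zpowersHom kˣ w))

lemma unitZPowRep_apply (w : kˣ) (g : Multiplicative ℤ) (x : k) :
    unitZPowRep w g x = ((w ^ g.toAdd : kˣ) : k) * x := rfl

lemma Units.sub_one_dvd_zpow_sub_one (w : kˣ) (n : ℤ) :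
    (w : k) - 1 ∣ ((w ^ n : kˣ) : k) - 1 := by
  obtain ⟨m, rfl | rfl⟩ := Int.eq_nat_or_neg n
  · simpa using sub_one_dvd_pow_sub_one (w : k) m
  · have hinv : ((w ^ (-(m : ℤ)) : kˣ) : k) * (w : k) ^ m = 1 := by
      rw [← Units.val_pow_eq_pow_val, ← Units.val_mul, zpow_neg, zpow_natCast, inv_mul_cancel,
        Units.val_one]
    have hfactor : ((w ^ (-(m : ℤ)) : kˣ) : k) - 1 =
        -((w ^ (-(m : ℤ)) : kˣ) : k) * ((w : k) ^ m - 1) := by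
      linear_combination hinv
    rw [hfactor]
    exact (sub_one_dvd_pow_sub_one (w : k) m).mul_left _

/-- A choice of `(w ^ n - 1) / (w - 1)`; it is unique when `w - 1` is left regular. -/
noncomputable def zpowGeomSum (w : kˣ) (n : ℤ) : k :=
  (w.sub_one_dvd_zpow_sub_one n).choose

lemma sub_one_mul_zpowGeomSum (w : kˣ) (n : ℤ) :
    ((w : k) - 1) * zpowGeomSum w n = ((w ^ n : kˣ) : k) - 1 :=
  (w.sub_one_dvd_zpow_sub_one n).choose_spec.symm

variable {w : kˣ}

lemma zpowGeomSum_one (hw : IsLeftRegular ((w : k) - 1)) : zpowGeomSum w 1 = 1 :=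
  hw <| show _ * _ = _ * _ by rw [sub_one_mul_zpowGeomSum, zpow_one, mul_one]

lemma zpowGeomSum_add (hw : IsLeftRegular ((w : k) - 1)) (m n : ℤ) :
    zpowGeomSum w (m + n) = ((w ^ m : kˣ) : k) * zpowGeomSum w n + zpowGeomSum w m := by
  refine hw (show _ * _ = _ * _ from ?_)
  have hval : ((w ^ (m + n) : kˣ) : k) = ((w ^ m : kˣ) : k) * ((w ^ n : kˣ) : k) := by
    rw [zpow_add, Units.val_mul]
  linear_combination sub_one_mul_zpowGeomSum w (m + n) - sub_one_mul_zpowGeomSum w m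
    - ((w ^ m : kˣ) : k) * sub_one_mul_zpowGeomSum w n + hval

lemma invariants_unitZPowRep_eq_bot (hw : IsLeftRegular ((w : k) - 1)) :
    (unitZPowRep w).invariants = ⊥ := by
  refine eq_bot_iff.2 fun x hx => hw (show _ * _ = _ * _ from ?_)
  have hfix := hx (.ofAdd 1)
  rw [unitZPowRep_apply, toAdd_ofAdd, zpow_one] at hfix
  linear_combination hfix

lemma subsingleton_H0_unitZPowRep (hw : IsLeftRegular ((w : k) - 1)) :
    Subsingleton (H0 (Rep.of (unitZPowRep w))) := by
  have : Subsingleton (unitZPowRep w).invariants := by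
    rw [invariants_unitZPowRep_eq_bot hw]
    infer_instance
  exact (H0Iso _).toLinearEquiv.toEquiv.subsingleton

lemma sub_one_mul_cocycles₁_apply (f : cocycles₁ (Rep.of (unitZPowRep w))) (g : Multiplicative ℤ) :
    ((w : k) - 1) * f g = (((w ^ g.toAdd : kˣ) : k) - 1) * f (.ofAdd 1) := by
  have hg1 := (mem_cocycles₁_iff f).1 f.2 g (.ofAdd 1)
  have h1g := (mem_cocycles₁_iff f).1 f.2 (.ofAdd 1) g
  rw [mul_comm] at h1g
  simp only [unitZPowRep_apply, toAdd_ofAdd, zpow_one] at hg1 h1g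
  linear_combination hg1 - h1g

lemma cocycles₁_apply_eq_zpowGeomSum_mul (hw : IsLeftRegular ((w : k) - 1))
    (f : cocycles₁ (Rep.of (unitZPowRep w))) (g : Multiplicative ℤ) :
    f g = zpowGeomSum w g.toAdd * f (.ofAdd 1) :=
  hw <| show _ * _ = _ * _ by rw [sub_one_mul_cocycles₁_apply, ← mul_assoc, sub_one_mul_zpowGeomSum]

lemma zpowGeomSum_mul_mem_cocycles₁ (hw : IsLeftRegular ((w : k) - 1)) (a : k) :
    (fun g : Multiplicative ℤ => zpowGeomSum w g.toAdd * a) ∈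
      cocycles₁ (Rep.of (unitZPowRep w)) := by
  refine (mem_cocycles₁_iff _).2 fun g h => ?_
  simp only [unitZPowRep_apply, toAdd_mul, zpowGeomSum_add hw]
  ring

noncomputable def cocycles₁EquivOfIsLeftRegular (hw : IsLeftRegular ((w : k) - 1)) :
    cocycles₁ (Rep.of (unitZPowRep w)) ≃ₗ[k] k where
  toFun f := f (.ofAdd 1)
  map_add' _ _ := rfl
  map_smul' _ _ := rfl
  invFun a := ⟨_, zpowGeomSum_mul_mem_cocycles₁ hw a⟩
  left_inv f := cocycles₁_ext fun g => (cocycles₁_apply_eq_zpowGeomSum_mul hw f g).symm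
  right_inv a := show zpowGeomSum w 1 * a = a by rw [zpowGeomSum_one hw, one_mul]

lemma mem_coboundaries₁_unitZPowRep_iff (hw : IsLeftRegular ((w : k) - 1))
    (f : cocycles₁ (Rep.of (unitZPowRep w))) :
    ⇑f ∈ coboundaries₁ (Rep.of (unitZPowRep w)) ↔ f (.ofAdd 1) ∈ Ideal.span {(w : k) - 1} := by
  constructor
  · rintro ⟨c, hc⟩
    refine Ideal.mem_span_singleton'.2 ⟨c, ?_⟩
    rw [← hc, d₀₁_hom_apply, Rep.of_ρ, unitZPowRep_apply, toAdd_ofAdd, zpow_one]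
    ring
  · intro hf
    obtain ⟨c, hc⟩ := Ideal.mem_span_singleton'.1 hf
    refine ⟨c, funext fun g => ?_⟩
    rw [d₀₁_hom_apply, Rep.of_ρ, unitZPowRep_apply, cocycles₁_apply_eq_zpowGeomSum_mul hw, ← hc]
    linear_combination -c * sub_one_mul_zpowGeomSum w g.toAdd

noncomputable def H1EquivQuotSpanSubOne (hw : IsLeftRegular ((w : k) - 1)) :
    H1 (Rep.of (unitZPowRep w)) ≃ₗ[k] k ⧸ Ideal.span {(w : k) - 1} :=
  let ψ := (Ideal.span {(w : k) - 1}).mkQ ∘ₗ (cocycles₁EquivOfIsLeftRegular hw).toLinearMap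
  have hker : LinearMap.ker (H1π _).hom = LinearMap.ker ψ := by
    ext f
    rw [LinearMap.mem_ker, LinearMap.mem_ker, H1π_eq_zero_iff, mem_coboundaries₁_unitZPowRep_iff hw]
    exact (Submodule.Quotient.mk_eq_zero _).symm
  have hπ : Function.Surjective (H1π (Rep.of (unitZPowRep w))).hom :=
    (ModuleCat.epi_iff_surjective _).1 inferInstance
  ((H1π _).hom.quotKerEquivOfSurjective hπ).symm ≪≫ₗ Submodule.quotEquivOfEq _ _ hker ≪≫ₗ
    ψ.quotKerEquivOfSurjective ((Submodule.mkQ_surjective _).comp (LinearEquiv.surjective _))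

end UnitZPowRep

lemma Units.zpow_ne_one_of_val_eq_natCast {R : Type*} [Ring R] [CharZero R] {u : Rˣ} {ℓ : ℕ}
    (hu : (u : R) = ℓ) (hℓ : ℓ ≠ 1) {q : ℤ} (hq : q ≠ 0) : u ^ q ≠ 1 := by
  rw [Ne, ← pow_natAbs_eq_one, ← Units.val_eq_one, Units.val_pow_eq_pow_val, hu]
  exact_mod_cast fun h => (Nat.pow_eq_one.1 h).elim hℓ (Int.natAbs_ne_zero.2 hq)

noncomputable def PadicInt.quotSpanEquivZModPowValuation {p : ℕ} [Fact p.Prime] {x : ℤ_[p]}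
    (hx : x ≠ 0) : (ℤ_[p] ⧸ Ideal.span {x}) ≃+* ZMod (p ^ x.valuation) :=
  have hspan : Ideal.span {x} = RingHom.ker (PadicInt.toZModPow x.valuation) := by
    rw [PadicInt.ker_toZModPow, Ideal.span_singleton_eq_span_singleton]
    exact Associated.symm ⟨PadicInt.unitCoeff hx, by rw [mul_comm, ← PadicInt.unitCoeff_spec hx]⟩
  (Ideal.quotEquivOfEq hspan).trans
    (RingHom.quotientKerEquivOfSurjective (ZMod.ringHom_surjective _))

lemma twistRep_eq_unitZPowRep (p : ℕ) [Fact p.Prime] (u : ℤ_[p]ˣ) (q : ℤ) :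
    twistRep p u q = unitZPowRep (u ^ q) := rfl

theorem stmt11_general (p ℓ : ℕ) [Fact p.Prime] (hℓ : ℓ.Prime)
    (q : ℤ) (hq : q ≠ 0)
    (u : ℤ_[p]ˣ) (hu : (u : ℤ_[p]) = (ℓ : ℤ_[p])) :
    Subsingleton (groupCohomology (Rep.of (twistRep p u q)) 0) ∧
    Nonempty ((groupCohomology (Rep.of (twistRep p u q)) 1) ≃ₗ[ℤ_[p]]
      (ℤ_[p] ⧸ Ideal.span {((u ^ q : ℤ_[p]ˣ) : ℤ_[p]) - 1})) ∧
    Nonempty ((ℤ_[p] ⧸ Ideal.span {((u ^ q : ℤ_[p]ˣ) : ℤ_[p]) - 1}) ≃+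
      ZMod (p ^ (((u ^ q : ℤ_[p]ˣ) : ℤ_[p]) - 1).valuation)) := by
  have hw1 : ((u ^ q : ℤ_[p]ˣ) : ℤ_[p]) - 1 ≠ 0 :=
    sub_ne_zero.2 (mt Units.val_eq_one.1 (u.zpow_ne_one_of_val_eq_natCast hu hℓ.ne_one hq))
  have hreg : IsLeftRegular (((u ^ q : ℤ_[p]ˣ) : ℤ_[p]) - 1) := (IsRegular.of_ne_zero hw1).left
  rw [twistRep_eq_unitZPowRep]
  exact ⟨subsingleton_H0_unitZPowRep hreg, ⟨H1EquivQuotSpanSubOne hreg⟩,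
    ⟨(PadicInt.quotSpanEquivZModPowValuation hw1).toAddEquiv⟩⟩

/-- For distinct primes `p ≠ ℓ` and a nonzero integer `q`, letting `ℤ_p(q)` be the
representation of the infinite cyclic group `ℤ` on `ℤ_p` where the generator acts by
multiplication by `ℓ^q`, one has `H⁰(ℤ; ℤ_p(q)) = 0` and
`H¹(ℤ; ℤ_p(q)) ≅ ℤ_p/(ℓ^q - 1)ℤ_p`, a finite cyclic group of order
`p^{v_p(ℓ^q - 1)}`. -/
theorem stmt11 (p ℓ : ℕ) [Fact p.Prime] (hℓ : ℓ.Prime) (hne : ℓ ≠ p)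
    (q : ℤ) (hq : q ≠ 0)
    (u : ℤ_[p]ˣ) (hu : (u : ℤ_[p]) = (ℓ : ℤ_[p])) :
    Subsingleton (groupCohomology (Rep.of (twistRep p u q)) 0) ∧
    Nonempty ((groupCohomology (Rep.of (twistRep p u q)) 1) ≃ₗ[ℤ_[p]]
      (ℤ_[p] ⧸ Ideal.span {((u ^ q : ℤ_[p]ˣ) : ℤ_[p]) - 1})) ∧
    Nonempty ((ℤ_[p] ⧸ Ideal.span {((u ^ q : ℤ_[p]ˣ) : ℤ_[p]) - 1}) ≃+
      ZMod (p ^ (((u ^ q : ℤ_[p]ˣ) : ℤ_[p]) - 1).valuation)) :=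
  stmt11_general p ℓ hℓ q hq u hu
end

section
/- Let (M_i)_{i ∈ I} be a family of finitely generated abelian groups, let B be a subgroup of the direct sum ⨁_{i ∈ I} M_i, and let A be an abelian group fitting in a short exact sequence 0 → B → A → C → 0 with C finitely generated. Then every additive group homomorphism from ℚ to A is zero. -/
open DirectSum

private lemma rat_hom_div {G : Type*} [AddCommGroup G] (f : ℚ →+ G) (q : ℚ) (n : ℕ)
    (hn : n ≠ 0) : f q = n • f (q / n) := by
  rw [← map_nsmul]
  congr 1
  have : (n : ℚ) ≠ 0 := Nat.cast_ne_zero.mpr hn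
  rw [nsmul_eq_mul]
  field_simp

private lemma rat_hom_int_zero (g : ℚ →+ ℤ) (q : ℚ) : g q = 0 := by
  have hdvd : ∀ n : ℕ, n ≠ 0 → (n : ℤ) ∣ g q := by
    intro n hn
    exact ⟨g (q / n), by rw [rat_hom_div g q n hn, nsmul_eq_mul]⟩
  by_contra h
  have h1 : ((g q).natAbs + 1 : ℤ) ∣ g q := by
    exact_mod_cast hdvd ((g q).natAbs + 1) (Nat.succ_ne_zero _)
  have h2 : |g q| < ((g q).natAbs + 1 : ℤ) := by
    rw [Int.abs_eq_natAbs]; exact_mod_cast Nat.lt_succ_self _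
  exact h (Int.eq_zero_of_abs_lt_dvd h1 h2)

private lemma rat_hom_zmod_zero (m : ℕ) (hm : m ≠ 0) (g : ℚ →+ ZMod m) (q : ℚ) :
    g q = 0 := by
  rw [rat_hom_div g q m hm, nsmul_eq_mul, ZMod.natCast_self, zero_mul]

/-- Any additive hom from `ℚ` to a finitely generated abelian group is zero. -/
private lemma rat_hom_fg_zero {G : Type*} [AddCommGroup G] [AddGroup.FG G]
    (f : ℚ →+ G) : f = 0 := by
  obtain ⟨n, K, fK, p, hp, e, ⟨E⟩⟩ := AddCommGroup.equiv_free_prod_directSum_zmod G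
  refine DFunLike.ext _ _ fun q => ?_
  show f q = 0
  rw [← EmbeddingLike.map_eq_zero_iff (f := E)]
  have hfst : (E (f q)).1 = 0 := by
    refine Finsupp.ext fun j => ?_
    exact rat_hom_int_zero
      ((Finsupp.applyAddHom j).comp ((AddMonoidHom.fst _ _).comp
        (E.toAddMonoidHom.comp f))) q
  have hsnd : (E (f q)).2 = 0 := by
    refine DFinsupp.ext fun i => ?_
    have hpi : p i ^ e i ≠ 0 := pow_ne_zero _ (hp i).pos.ne'
    exact rat_hom_zmod_zero _ hpi
      ((DFinsupp.evalAddMonoidHom i).comp ((AddMonoidHom.snd _ _).comp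
        (E.toAddMonoidHom.comp f))) q
  exact Prod.ext hfst hsnd

/-- Let `(M i)` be a family of finitely generated abelian groups, `B` a subgroup of
`⨁ i, M i`, and `A` an abelian group fitting in a short exact sequence
`0 → B → A → C → 0` with `C` finitely generated.  Then every additive group homomorphism
`ℚ → A` is zero. -/
theorem stmt12 {I : Type*} (M : I → Type*) [∀ i, AddCommGroup (M i)]
    [∀ i, AddGroup.FG (M i)]
    (B : AddSubgroup (⨁ i, M i))
    (A : Type*) [AddCommGroup A]
    (C : Type*) [AddCommGroup C] [AddGroup.FG C]
    (ι : B →+ A) (hι : Function.Injective ι)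
    (π : A →+ C) (hπ : Function.Surjective π)
    (hexact : ι.range = π.ker)
    (f : ℚ →+ A) : f = 0 := by
  -- π ∘ f = 0 since C is finitely generated
  have hπf : π.comp f = 0 := rat_hom_fg_zero _
  have hmem : ∀ q : ℚ, f q ∈ ι.range := by
    intro q
    rw [hexact, AddMonoidHom.mem_ker]
    exact DFunLike.congr_fun hπf q
  -- lift f to a hom g : ℚ →+ B
  let e : B ≃+ ι.range := AddMonoidHom.ofInjective hι
  let g : ℚ →+ B := e.symm.toAddMonoidHom.comp (f.codRestrict ι.range hmem)
  have hfg : ∀ q : ℚ, ι (g q) = f q := by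
    intro q
    have : e (g q) = ⟨f q, hmem q⟩ := e.apply_symm_apply _
    have h2 : (e (g q) : A) = ι (g q) := AddMonoidHom.ofInjective_apply hι
    rw [this] at h2
    exact h2.symm
  refine DFunLike.ext _ _ fun q => ?_
  have hg : (g q : ⨁ i, M i) = 0 := by
    refine DFinsupp.ext fun i => ?_
    have : ((DFinsupp.evalAddMonoidHom i).comp (B.subtype.comp g) : ℚ →+ M i) = 0 :=
      rat_hom_fg_zero _
    exact DFunLike.congr_fun this q
  have : g q = 0 := Subtype.ext hg
  rw [AddMonoidHom.zero_apply, ← hfg q, this, map_zero]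
end
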